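/- arXiv:1402.0473 — 3 statements merged into one kernel-verified Lean document; each statement's English description precedes it below -/
import Mathlib

section
/- Let m ∈ ℂ with Re m < 1. Define for x > 0 and η ∈ ℝ the function f(x,y) = x^{1-m}/(x² + (y-η)²)^{1-m/2}. Then f satisfies the Weinstein equation L_m f = 0 on ℍ⁺, i.e. ∂²_{xx}f + ∂²_{yy}f + (m/x)∂_x f = 0 at every point (x,y) with x > 0 and (x,y) ≠ (0,η). -/
/-!
Write `Q = x² + (y - η)²`. The product and chain rules give, for `x > 0`,
`L_m (x^α Q^β) = α (α - 1 + m) x^(α-2) Q^β + 2β (2α + 2β + m) x^α Q^(β-1)`,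
the `(y - η)²` and `x²` contributions recombining into a single `Q` factor.
The kernel is `α = 1 - m`, `β = m/2 - 1`, for which both coefficients vanish.
-/

noncomputable def pdx (u : ℝ → ℝ → ℂ) (x y : ℝ) : ℂ := deriv (fun t => u t y) x
noncomputable def pdy (u : ℝ → ℝ → ℂ) (x y : ℝ) : ℂ := deriv (fun t => u x t) y

open Complex Filter Topology

noncomputable def kernelMonomial (η : ℝ) (α β : ℂ) (x y : ℝ) : ℂ :=
  (x : ℂ) ^ α * ((x ^ 2 + (y - η) ^ 2 : ℝ) : ℂ) ^ β

noncomputable def weinsteinOp (m : ℂ) (u : ℝ → ℝ → ℂ) (x y : ℝ) : ℂ :=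
  pdx (pdx u) x y + pdy (pdy u) x y + m / x * pdx u x y

theorem HasDerivAt.ofReal_cpow_const {q : ℝ → ℝ} {q' t : ℝ} (hq : HasDerivAt q q' t)
    (hpos : 0 < q t) (β : ℂ) :
    HasDerivAt (fun s => (q s : ℂ) ^ β) (β * (q t : ℂ) ^ (β - 1) * q') t :=
  (hasStrictDerivAt_cpow_const (ofReal_mem_slitPlane.2 hpos)).hasDerivAt.comp
    (h₂ := fun z : ℂ => z ^ β) t hq.ofReal_comp

namespace kernelMonomial

variable {η : ℝ} {α β : ℂ} {x y : ℝ}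

theorem add_one_left (hx : x ≠ 0) :
    kernelMonomial η (α + 1) β x y = x * kernelMonomial η α β x y := by
  rw [kernelMonomial, kernelMonomial, cpow_add _ _ (ofReal_ne_zero.2 hx), cpow_one]
  ring

theorem add_one_right (hx : x ≠ 0) :
    kernelMonomial η α (β + 1) x y
      = ((x ^ 2 + (y - η) ^ 2 : ℝ) : ℂ) * kernelMonomial η α β x y := by
  have hQ : ((x ^ 2 + (y - η) ^ 2 : ℝ) : ℂ) ≠ 0 := ofReal_ne_zero.2 (by positivity)
  rw [kernelMonomial, kernelMonomial, cpow_add _ _ hQ, cpow_one]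
  ring

theorem hasDerivAt_left (hx : 0 < x) :
    HasDerivAt (fun t => kernelMonomial η α β t y)
      (α * kernelMonomial η (α - 1) β x y + 2 * β * kernelMonomial η (α + 1) (β - 1) x y) x := by
  have hpow := (hasDerivAt_id x).ofReal_cpow_const hx α
  have hQ := ((hasDerivAt_pow 2 x).add_const ((y - η) ^ 2)).ofReal_cpow_const
    (by positivity : 0 < x ^ 2 + (y - η) ^ 2) β
  refine (hpow.mul hQ).congr_deriv ?_
  rw [add_one_left hx.ne']
  simp only [kernelMonomial, id]
  push_cast
  ring

theorem hasDerivAt_right (hx : x ≠ 0) :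
    HasDerivAt (fun s => kernelMonomial η α β x s)
      (2 * β * (y - η) * kernelMonomial η α (β - 1) x y) y := by
  have hQ := (((hasDerivAt_id y).sub_const η).pow 2 |>.const_add (x ^ 2)).ofReal_cpow_const
    (by positivity : 0 < x ^ 2 + (y - η) ^ 2) β
  refine (hQ.const_mul ((x : ℂ) ^ α)).congr_deriv ?_
  simp only [kernelMonomial, id, Pi.pow_apply]
  push_cast
  ring

theorem pdx_eq (hx : 0 < x) :
    pdx (kernelMonomial η α β) x y
      = α * kernelMonomial η (α - 1) β x y + 2 * β * kernelMonomial η (α + 1) (β - 1) x y :=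
  (hasDerivAt_left hx).deriv

theorem pdx_pdx_eq (hx : 0 < x) :
    pdx (pdx (kernelMonomial η α β)) x y
      = α * (α - 1) * kernelMonomial η (α - 2) β x y
        + 2 * β * (2 * α + 1) * kernelMonomial η α (β - 1) x y
        + 4 * β * (β - 1) * kernelMonomial η (α + 2) (β - 2) x y := by
  have hpdx : (fun t => pdx (kernelMonomial η α β) t y) =ᶠ[𝓝 x] fun t =>
      α * kernelMonomial η (α - 1) β t y + 2 * β * kernelMonomial η (α + 1) (β - 1) t y :=
    (eventually_gt_nhds hx).mono fun t ht => pdx_eq ht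
  have hsum : HasDerivAt (fun t =>
      α * kernelMonomial η (α - 1) β t y + 2 * β * kernelMonomial η (α + 1) (β - 1) t y) _ x :=
    ((hasDerivAt_left hx).const_mul α).add ((hasDerivAt_left hx).const_mul (2 * β))
  rw [pdx, hpdx.deriv_eq, hsum.deriv]
  simp only [sub_add_cancel, add_sub_cancel_right, sub_sub, add_assoc, one_add_one_eq_two]
  ring

theorem pdy_pdy_eq (hx : x ≠ 0) :
    pdy (pdy (kernelMonomial η α β)) x y
      = 2 * β * kernelMonomial η α (β - 1) x y
        + 4 * β * (β - 1) * (y - η) ^ 2 * kernelMonomial η α (β - 2) x y := by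
  have hpdy : (fun s => pdy (kernelMonomial η α β) x s)
      = fun s => 2 * β * (s - η) * kernelMonomial η α (β - 1) x s :=
    funext fun s => (hasDerivAt_right hx).deriv
  have hlin : HasDerivAt (fun s : ℝ => 2 * β * ((s : ℂ) - η)) (2 * β) y := by
    simpa using (((hasDerivAt_id y).sub_const η).ofReal_comp).const_mul (2 * β)
  have hprod : HasDerivAt (fun s => 2 * β * (s - η) * kernelMonomial η α (β - 1) x s) _ y :=
    hlin.mul (hasDerivAt_right hx)
  rw [pdy, hpdy, hprod.deriv, sub_sub, one_add_one_eq_two]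
  ring

theorem weinsteinOp_eq (m : ℂ) (hx : 0 < x) :
    weinsteinOp m (kernelMonomial η α β) x y
      = α * (α - 1 + m) * kernelMonomial η (α - 2) β x y
        + 2 * β * (2 * α + 2 * β + m) * kernelMonomial η α (β - 1) x y := by
  have hx₀ : (x : ℂ) ≠ 0 := ofReal_ne_zero.2 hx.ne'
  have hα₁ : kernelMonomial η (α - 1) β x y = x * kernelMonomial η (α - 2) β x y := by
    rw [show α - 1 = α - 2 + 1 by ring, add_one_left hx.ne']
  have hα₂ : kernelMonomial η (α + 2) (β - 2) x y
      = x ^ 2 * kernelMonomial η α (β - 2) x y := by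
    rw [show α + 2 = α + 1 + 1 by ring, add_one_left hx.ne', add_one_left hx.ne']
    ring
  have hβ : kernelMonomial η α (β - 1) x y
      = ((x ^ 2 + (y - η) ^ 2 : ℝ) : ℂ) * kernelMonomial η α (β - 2) x y := by
    rw [show β - 1 = β - 2 + 1 by ring, add_one_right hx.ne']
  rw [weinsteinOp, pdx_pdx_eq hx, pdy_pdy_eq hx.ne', pdx_eq hx, add_one_left hx.ne', hα₁, hα₂,
    hβ]
  push_cast
  field_simp
  ring

end kernelMonomial

theorem poisson_kernel_solves_weinstein_general (m : ℂ) (η : ℝ)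
    (f : ℝ → ℝ → ℂ)
    (hf : ∀ x y : ℝ, f x y
      = (x : ℂ) ^ (1 - m) / (((x ^ 2 + (y - η) ^ 2 : ℝ)) : ℂ) ^ (1 - m / 2))
    (x y : ℝ) (hx : 0 < x) :
    pdx (pdx f) x y + pdy (pdy f) x y + (m / (x : ℂ)) * pdx f x y = 0 := by
  have hfK : f = kernelMonomial η (1 - m) (m / 2 - 1) := by
    funext s t
    rw [hf, kernelMonomial, div_eq_mul_inv, ← cpow_neg, neg_sub]
  subst hfK
  change weinsteinOp m _ x y = 0
  rw [kernelMonomial.weinsteinOp_eq m hx]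
  ring

/-- For `Re m < 1`, the Poisson-type kernel `f(x,y) = x^{1-m}/(x²+(y-η)²)^{1-m/2}`
satisfies the Weinstein equation `L_m f = 0` on the right half-plane. -/
theorem poisson_kernel_solves_weinstein (m : ℂ) (hm : m.re < 1) (η : ℝ)
    (f : ℝ → ℝ → ℂ)
    (hf : ∀ x y : ℝ, f x y
      = (x : ℂ) ^ (1 - m) / (((x ^ 2 + (y - η) ^ 2 : ℝ)) : ℂ) ^ (1 - m / 2))
    (x y : ℝ) (hx : 0 < x) :
    pdx (pdx f) x y + pdy (pdy f) x y + (m / (x : ℂ)) * pdx f x y = 0 :=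
  poisson_kernel_solves_weinstein_general m η f hf x y hx
end

section
/- Let m ∈ ℂ, Re m < 1, and let u : ℝ → ℝ be continuous and bounded. Define U(x,y) = C_m x^{1-m} ∫_{-∞}^{∞} u(η)/(x²+(y-η)²)^{1-m/2} dη with C_m = ((1-m)/(2π)) ∫₀^π sin^{1-m}θ dθ. Then for every y₀ ∈ ℝ, U(x,y) → u(y₀) as (x,y) → (0,y₀) with x > 0. -/
open Real Filter

open MeasureTheory Set

/-!
The substitution `η = y - x t` turns `U(x, y)` into `C_m ∫ u(y - x t) (1 + t²)^(m/2 - 1) dt`.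
For `Re m < 1` the kernel `(1 + t²)^(m/2 - 1)` is integrable, so by dominated convergence the
integral tends to `u(y₀) ∫ (1 + t²)^(m/2 - 1) dt` as `(x, y) → (0, y₀)`, and it remains to see
that `C_m` normalises the kernel. The substitution `t = tan (θ - π/2)` turns the kernel integral
into `∫₀^π sin^(-m) θ dθ`, and the substitution `x = (1 - cos θ)/2` turns `∫₀^π sin^a θ dθ` into
`2^a B((a+1)/2, (a+1)/2)`, which by Legendre's duplication formula is
`√π Γ((a+1)/2) / Γ(a/2 + 1)`. In the product of the integrals for `a = s` and `a = s - 1` the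
factor `Γ((s+1)/2)` cancels, leaving `s ∫₀^π sin^s · ∫₀^π sin^(s-1) = 2π`, which is exactly the
normalisation (with `s = 1 - m`).
-/

lemma ofReal_sq_cpow {r : ℝ} (hr : 0 ≤ r) (z : ℂ) : ((r ^ 2 : ℝ) : ℂ) ^ z = (r : ℂ) ^ (2 * z) := by
  rw [show (2 : ℂ) * z = ((2 : ℝ) : ℂ) * z by norm_num, Complex.cpow_mul_ofReal_nonneg hr,
    Real.rpow_two]

lemma inv_sq_smul_ofReal_inv_sq_cpow {r : ℝ} (hr : 0 < r) (z : ℂ) :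
    (r ^ 2)⁻¹ • (((r ^ 2)⁻¹ : ℝ) : ℂ) ^ z = (r : ℂ) ^ (-2 * z - 2) := by
  have hr' : (r : ℂ) ≠ 0 := by exact_mod_cast hr.ne'
  rw [← Real.rpow_two, ← Real.rpow_neg hr.le, Complex.real_smul,
    ← Complex.cpow_mul_ofReal_nonneg hr.le, Complex.ofReal_cpow hr.le, ← Complex.cpow_add _ _ hr']
  congr 1
  push_cast
  ring

lemma abs_half_sin_smul_beta_integrand {θ : ℝ} (hθ : θ ∈ Ioo 0 π) (a : ℂ) :
    |sin θ / 2| • ((2 : ℂ) ^ a * ((((1 - cos θ) / 2 : ℝ) : ℂ) ^ ((a + 1) / 2 - 1) *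
      (1 - (((1 - cos θ) / 2 : ℝ) : ℂ)) ^ ((a + 1) / 2 - 1))) = (sin θ : ℂ) ^ a := by
  have hs : 0 < sin θ / 2 := by have := sin_pos_of_pos_of_lt_pi hθ.1 hθ.2; positivity
  have hs' : ((sin θ / 2 : ℝ) : ℂ) ≠ 0 := by exact_mod_cast hs.ne'
  have hprod : (1 - cos θ) / 2 * (1 - (1 - cos θ) / 2) = (sin θ / 2) ^ 2 := by
    linear_combination (-1 / 4 : ℝ) * sin_sq_add_cos_sq θ
  rw [show (1 : ℂ) - (((1 - cos θ) / 2 : ℝ) : ℂ) = ((1 - (1 - cos θ) / 2 : ℝ) : ℂ) by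
      push_cast; ring,
    ← Complex.mul_cpow_ofReal_nonneg (by linarith [cos_le_one θ]) (by linarith [neg_one_le_cos θ]),
    ← Complex.ofReal_mul, hprod, ofReal_sq_cpow hs.le, abs_of_pos hs, Complex.real_smul,
    show 2 * ((a + 1) / 2 - 1) = a - 1 by ring, Complex.cpow_sub _ _ hs', Complex.cpow_one,
    mul_left_comm, mul_div_cancel₀ _ hs', show (2 : ℂ) = ((2 : ℝ) : ℂ) by norm_num,
    ← Complex.mul_cpow_ofReal_nonneg zero_le_two hs.le]
  congr 2
  push_cast
  ring

lemma image_one_sub_cos_div_two_Ioo : (fun θ ↦ (1 - cos θ) / 2) '' Ioo 0 π = Ioo 0 1 := by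
  rw [show (fun θ ↦ (1 - cos θ) / 2) = (fun c ↦ (1 - c) / 2) ∘ cos from rfl, image_comp,
    show cos '' Ioo 0 π = Ioo (-1) 1 from cosPartialHomeomorph.image_source_eq_target]
  ext x
  simp only [mem_image, mem_Ioo]
  constructor
  · rintro ⟨c, ⟨h₁, h₂⟩, rfl⟩
    constructor <;> linarith
  · rintro ⟨h₁, h₂⟩
    exact ⟨1 - 2 * x, ⟨by linarith, by linarith⟩, by ring⟩

theorem integral_sin_cpow_eq_betaIntegral (a : ℂ) :
    ∫ θ in (0)..π, (sin θ : ℂ) ^ a = 2 ^ a * Complex.betaIntegral ((a + 1) / 2) ((a + 1) / 2) := by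
  have hderiv : ∀ θ ∈ Ioo 0 π,
      HasDerivWithinAt (fun θ ↦ (1 - cos θ) / 2) (sin θ / 2) (Ioo 0 π) θ := fun θ _ ↦ by
    simpa using (((hasDerivAt_cos θ).const_sub 1).div_const 2).hasDerivWithinAt
  have hinj : InjOn (fun θ ↦ (1 - cos θ) / 2) (Ioo 0 π) := fun θ hθ φ hφ h ↦
    injOn_cos (Ioo_subset_Icc_self hθ) (Ioo_subset_Icc_self hφ) (by simp only at h; linarith)
  rw [intervalIntegral.integral_of_le pi_pos.le, integral_Ioc_eq_integral_Ioo,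
    ← setIntegral_congr_fun measurableSet_Ioo (fun θ hθ ↦ abs_half_sin_smul_beta_integrand hθ a),
    ← integral_image_eq_integral_abs_deriv_smul measurableSet_Ioo hderiv hinj
      (fun x : ℝ ↦ (2 : ℂ) ^ a * ((x : ℂ) ^ ((a + 1) / 2 - 1) * (1 - (x : ℂ)) ^ ((a + 1) / 2 - 1))),
    image_one_sub_cos_div_two_Ioo, integral_const_mul, Complex.betaIntegral,
    intervalIntegral.integral_of_le zero_le_one, integral_Ioc_eq_integral_Ioo]

theorem integral_sin_cpow {a : ℂ} (ha : -1 < a.re) :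
    ∫ θ in (0)..π, (sin θ : ℂ) ^ a =
      √π * Complex.Gamma ((a + 1) / 2) / Complex.Gamma (a / 2 + 1) := by
  have hw : 0 < ((a + 1) / 2).re := by
    simp only [Complex.div_ofNat_re, Complex.add_re, Complex.one_re]
    linarith
  have hdup := Complex.Gamma_mul_Gamma_add_half ((a + 1) / 2)
  rw [show (a + 1) / 2 + 1 / 2 = a / 2 + 1 by ring,
    show 2 * ((a + 1) / 2) = (a + 1) / 2 + (a + 1) / 2 by ring,
    show 1 - ((a + 1) / 2 + (a + 1) / 2) = -a by ring] at hdup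
  have h₁ : Complex.Gamma ((a + 1) / 2 + (a + 1) / 2) ≠ 0 :=
    Complex.Gamma_ne_zero_of_re_pos (by simp only [Complex.add_re]; linarith)
  have h₂ : Complex.Gamma (a / 2 + 1) ≠ 0 := Complex.Gamma_ne_zero_of_re_pos (by
    simp only [Complex.add_re, Complex.div_ofNat_re, Complex.one_re]
    linarith)
  have h₃ : (2 : ℂ) ^ a * 2 ^ (-a) = 1 := by
    rw [← Complex.cpow_add _ _ two_ne_zero, add_neg_cancel, Complex.cpow_zero]
  rw [integral_sin_cpow_eq_betaIntegral, Complex.betaIntegral_eq_Gamma_mul_div _ _ hw hw]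
  generalize Complex.Gamma ((a + 1) / 2) = Γw at hdup ⊢
  generalize Complex.Gamma ((a + 1) / 2 + (a + 1) / 2) = Γ2w at h₁ hdup ⊢
  generalize Complex.Gamma (a / 2 + 1) = Γw' at h₂ hdup ⊢
  field_simp
  linear_combination (2 : ℂ) ^ a * Γw * hdup + Γ2w * √π * Γw * h₃

theorem mul_integral_sin_cpow_mul_integral_sin_cpow_sub_one {s : ℂ} (hs : 0 < s.re) :
    s * ((∫ θ in (0)..π, (sin θ : ℂ) ^ s) * ∫ θ in (0)..π, (sin θ : ℂ) ^ (s - 1)) = 2 * π := by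
  have hs₀ : s ≠ 0 := by rintro rfl; simp at hs
  have h₁ : Complex.Gamma ((s + 1) / 2) ≠ 0 := Complex.Gamma_ne_zero_of_re_pos (by
    simp only [Complex.div_ofNat_re, Complex.add_re, Complex.one_re]
    linarith)
  have h₂ : Complex.Gamma (s / 2) ≠ 0 := Complex.Gamma_ne_zero_of_re_pos (by
    simp only [Complex.div_ofNat_re]
    linarith)
  have hrec : Complex.Gamma (s / 2 + 1) = s / 2 * Complex.Gamma (s / 2) :=
    Complex.Gamma_add_one _ (div_ne_zero hs₀ two_ne_zero)
  have hπ : ((√π : ℝ) : ℂ) ^ 2 = π := by rw [← Complex.ofReal_pow, sq_sqrt pi_pos.le]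
  rw [integral_sin_cpow (by linarith), integral_sin_cpow (by
      simp only [Complex.sub_re, Complex.one_re]
      linarith),
    show (s - 1 + 1) / 2 = s / 2 by ring, show (s - 1) / 2 + 1 = (s + 1) / 2 by ring, hrec]
  generalize Complex.Gamma ((s + 1) / 2) = Γ₁ at h₁ ⊢
  generalize Complex.Gamma (s / 2) = Γ₂ at h₂ ⊢
  field_simp
  linear_combination hπ

lemma image_tan_sub_pi_div_two_Ioo : (fun θ ↦ tan (θ - π / 2)) '' Ioo 0 π = univ := by
  rw [show (fun θ ↦ tan (θ - π / 2)) = tan ∘ (· - π / 2) from rfl, image_comp,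
    image_sub_const_Ioo, zero_sub, show π - π / 2 = π / 2 by ring, image_tan_Ioo]

theorem integral_one_add_sq_cpow (z : ℂ) :
    ∫ t : ℝ, ((1 + t ^ 2 : ℝ) : ℂ) ^ z = ∫ θ in (0)..π, (sin θ : ℂ) ^ (-2 * z - 2) := by
  have hsin : ∀ θ ∈ Ioo 0 π, 0 < sin θ := fun θ hθ ↦ sin_pos_of_pos_of_lt_pi hθ.1 hθ.2
  have hcos : ∀ θ ∈ Ioo 0 π, cos (θ - π / 2) ≠ 0 := fun θ hθ ↦
    (cos_sub_pi_div_two θ).symm ▸ (hsin θ hθ).ne'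
  have hderiv : ∀ θ ∈ Ioo 0 π,
      HasDerivWithinAt (fun θ ↦ tan (θ - π / 2)) ((sin θ ^ 2)⁻¹) (Ioo 0 π) θ := fun θ hθ ↦ by
    have := (hasDerivAt_tan (hcos θ hθ)).comp θ ((hasDerivAt_id θ).sub_const (π / 2))
    simpa [cos_sub_pi_div_two, Function.comp_def] using this.hasDerivWithinAt
  have hinj : InjOn (fun θ ↦ tan (θ - π / 2)) (Ioo 0 π) := fun θ hθ φ hφ h ↦ by
    have := injOn_tan ⟨by linarith [hθ.1], by linarith [hθ.2]⟩
      ⟨by linarith [hφ.1], by linarith [hφ.2]⟩ h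
    linarith
  have hpoint : ∀ θ ∈ Ioo 0 π, |(sin θ ^ 2)⁻¹| • ((1 + tan (θ - π / 2) ^ 2 : ℝ) : ℂ) ^ z =
      (sin θ : ℂ) ^ (-2 * z - 2) := fun θ hθ ↦ by
    rw [abs_of_pos (by have := hsin θ hθ; positivity), ← inv_sq_smul_ofReal_inv_sq_cpow (hsin θ hθ),
      ← cos_sub_pi_div_two, ← inv_one_add_tan_sq (hcos θ hθ), inv_inv]
  rw [← setIntegral_univ, ← image_tan_sub_pi_div_two_Ioo,
    integral_image_eq_integral_abs_deriv_smul measurableSet_Ioo hderiv hinj,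
    setIntegral_congr_fun measurableSet_Ioo hpoint,
    intervalIntegral.integral_of_le pi_pos.le, integral_Ioc_eq_integral_Ioo]

theorem integrable_one_add_sq_cpow {z : ℂ} (hz : z.re < -1 / 2) :
    Integrable (fun t : ℝ ↦ ((1 + t ^ 2 : ℝ) : ℂ) ^ z) := by
  refine (integrable_rpow_neg_one_add_norm_sq (E := ℝ) (r := -2 * z.re) (by
      simp only [Module.finrank_self, Nat.cast_one]
      linarith)).mono'
    (Measurable.aestronglyMeasurable (by fun_prop)) (ae_of_all _ fun t ↦ le_of_eq ?_)
  rw [Complex.norm_cpow_eq_rpow_re_of_pos (by positivity), Real.norm_eq_abs, sq_abs]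
  congr 1
  ring

noncomputable def axisymmetricPoissonKernel (m : ℂ) (t : ℝ) : ℂ :=
  ((1 + t ^ 2 : ℝ) : ℂ) ^ (m / 2 - 1)

theorem integrable_axisymmetricPoissonKernel {m : ℂ} (hm : m.re < 1) :
    Integrable (axisymmetricPoissonKernel m) :=
  integrable_one_add_sq_cpow (by
    simp only [Complex.sub_re, Complex.div_ofNat_re, Complex.one_re]
    linarith)

theorem constant_mul_integral_axisymmetricPoissonKernel_eq_one {m : ℂ} (hm : m.re < 1) :
    (1 - m) / (2 * π) * (∫ θ in (0)..π, (sin θ : ℂ) ^ (1 - m)) *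
      ∫ t, axisymmetricPoissonKernel m t = 1 := by
  have hπ : (π : ℂ) ≠ 0 := by exact_mod_cast pi_ne_zero
  have hwallis := mul_integral_sin_cpow_mul_integral_sin_cpow_sub_one (s := 1 - m) (by
    simp only [Complex.sub_re, Complex.one_re]
    linarith)
  simp only [axisymmetricPoissonKernel]
  rw [integral_one_add_sq_cpow, show -2 * (m / 2 - 1) - 2 = 1 - m - 1 by ring]
  field_simp
  linear_combination hwallis

theorem integral_comp_sub_mul {E : Type*} [NormedAddCommGroup E] [NormedSpace ℝ E] {f : ℝ → E}
    {x : ℝ} (hx : 0 < x) (y : ℝ) : ∫ η, f η = x • ∫ t, f (y - x * t) := by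
  rw [Measure.integral_comp_mul_left (fun s ↦ f (y - s)), integral_sub_left_eq_self,
    abs_inv, abs_of_pos hx, smul_inv_smul₀ hx.ne']

theorem cpow_mul_integral_div_cpow_eq_integral_axisymmetricPoissonKernel (f : ℝ → ℂ) (m : ℂ)
    {x : ℝ} (hx : 0 < x) (y : ℝ) :
    (x : ℂ) ^ (1 - m) * ∫ η, f η / ((x ^ 2 + (y - η) ^ 2 : ℝ) : ℂ) ^ (1 - m / 2) =
      ∫ t, f (y - x * t) * axisymmetricPoissonKernel m t := by
  have hx' : (x : ℂ) ≠ 0 := by exact_mod_cast hx.ne'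
  have hscale : ∀ t : ℝ, f (y - x * t) / ((x ^ 2 + (y - (y - x * t)) ^ 2 : ℝ) : ℂ) ^ (1 - m / 2) =
      (x : ℂ) ^ (m - 2) * (f (y - x * t) * axisymmetricPoissonKernel m t) := fun t ↦ by
    rw [show x ^ 2 + (y - (y - x * t)) ^ 2 = x ^ 2 * (1 + t ^ 2) by ring, Complex.ofReal_mul,
      Complex.mul_cpow_ofReal_nonneg (by positivity) (by positivity), ofReal_sq_cpow hx.le,
      axisymmetricPoissonKernel, show m / 2 - 1 = -(1 - m / 2) by ring,
      show m - 2 = -(2 * (1 - m / 2)) by ring, Complex.cpow_neg, Complex.cpow_neg,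
      div_eq_mul_inv, mul_inv]
    ring
  have hpow : (x : ℂ) ^ (1 - m) * x * x ^ (m - 2) = 1 := by
    nth_rewrite 2 [← Complex.cpow_one (x : ℂ)]
    rw [← Complex.cpow_add _ _ hx', ← Complex.cpow_add _ _ hx',
      show 1 - m + 1 + (m - 2) = 0 by ring, Complex.cpow_zero]
  rw [integral_comp_sub_mul hx y, Complex.real_smul, integral_congr_ae (ae_of_all _ hscale),
    integral_const_mul, ← mul_assoc, ← mul_assoc, hpow, one_mul]

theorem tendsto_integral_comp_sub_mul_mul {k u : ℝ → ℂ} (hk : Integrable k) (hu : Continuous u)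
    (hub : ∃ M, ∀ y, ‖u y‖ ≤ M) (y₀ : ℝ) :
    Tendsto (fun p : ℝ × ℝ ↦ ∫ t, u (p.2 - p.1 * t) * k t) (nhds (0, y₀))
      (nhds (u y₀ * ∫ t, k t)) := by
  obtain ⟨M, hM⟩ := hub
  have hcont : Continuous fun q : (ℝ × ℝ) × ℝ ↦ u (q.1.2 - q.1.1 * q.2) := by fun_prop
  rw [← integral_const_mul]
  refine tendsto_integral_filter_of_dominated_convergence (fun t ↦ M * ‖k t‖)
    (Eventually.of_forall fun p ↦ ?_) (Eventually.of_forall fun p ↦ ae_of_all _ fun t ↦ ?_)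
    (hk.norm.const_mul M) (ae_of_all _ fun t ↦ ?_)
  · exact (hcont.comp (Continuous.prodMk_right p)).aestronglyMeasurable.mul hk.aestronglyMeasurable
  · rw [norm_mul]
    exact mul_le_mul_of_nonneg_right (hM _) (norm_nonneg _)
  · simpa using ((hcont.comp (Continuous.prodMk_left t)).tendsto (0, y₀)).mul_const (k t)

/-- Poisson formula for axisymmetric potentials: boundary values. For `Re m < 1` and `u : ℝ → ℝ`
continuous and bounded, the function
`U(x,y) = C_m x^{1-m} ∫_ℝ u(η)/(x²+(y-η)²)^{1-m/2} dη` tends to `u(y₀)` as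
`(x,y) → (0,y₀)` with `x > 0`. -/
theorem poisson_boundary_values (m : ℂ) (hm : m.re < 1) (u : ℝ → ℝ)
    (hu : Continuous u) (hub : ∃ M : ℝ, ∀ y : ℝ, |u y| ≤ M)
    (C : ℂ)
    (hC : C = ((1 - m) / (2 * (Real.pi : ℂ))) *
      ∫ θ in (0:ℝ)..Real.pi, (Real.sin θ : ℂ) ^ (1 - m))
    (U : ℝ → ℝ → ℂ)
    (hU : ∀ x y : ℝ, U x y
      = C * (x : ℂ) ^ (1 - m) *
          ∫ η : ℝ, (u η : ℂ) / (((x ^ 2 + (y - η) ^ 2 : ℝ)) : ℂ) ^ (1 - m / 2))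
    (y₀ : ℝ) :
    Tendsto (fun p : ℝ × ℝ => U p.1 p.2)
      (nhdsWithin (0, y₀) {p : ℝ × ℝ | 0 < p.1}) (nhds (u y₀ : ℂ)) := by
  obtain ⟨M, hM⟩ := hub
  have hlim := tendsto_integral_comp_sub_mul_mul (integrable_axisymmetricPoissonKernel hm)
    (Complex.continuous_ofReal.comp hu) ⟨M, fun y ↦ by simpa using hM y⟩ y₀
  have hval : C * ((u y₀ : ℂ) * ∫ t, axisymmetricPoissonKernel m t) = u y₀ := by
    rw [mul_left_comm, hC, constant_mul_integral_axisymmetricPoissonKernel_eq_one hm, mul_one]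
  rw [← hval]
  refine ((hlim.mono_left nhdsWithin_le_nhds).const_mul C).congr' ?_
  filter_upwards [self_mem_nhdsWithin] with p hp
  rw [hU, mul_assoc, cpow_mul_integral_div_cpow_eq_integral_axisymmetricPoissonKernel _ m hp]
  rfl
end

section
/- Let m ∈ ℂ, α > 0, and let u be a C² solution of L_m u = 0 (Δu + (m/x)∂_x u = 0) on an open subset of ℍ⁺. In bipolar coordinates x = α sinh τ/(cosh τ - cos θ), y = α sin θ/(cosh τ - cos θ), define v_m(τ,θ) = sinh^{(m-1)/2}τ · (cosh τ - cos θ)^{-m/2} · u(τ,θ). Then v_m satisfies ∂²v_m/∂τ² + ∂²v_m/∂θ² + coth τ · ∂v_m/∂τ + (1/4 - (m-1)²/(4 sinh²τ)) v_m = 0. -/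
/-!
Write `v = ρ · (u ∘ Φ)`, with `Φ` the bipolar map and `ρ = exp L`,
`L = ((m - 1) / 2) log sinh τ - (m / 2) log (cosh τ - cos θ)`.
The map `Φ` is anticonformal (`∂_θ Φ` is `∂_τ Φ` turned by a right angle) with harmonic
components, so `Δ (u ∘ Φ) = |∂_τ Φ|² (Δ u) ∘ Φ`. Next, `2 ∇L + (coth τ, 0) = m ∇ (log x ∘ Φ)`,
which turns all first-order terms in `∇ (u ∘ Φ)` into `|∂_τ Φ|² (m / x) ∂_x u`. Finally `ρ` itself
solves the target equation, because `log (cosh τ - cos θ)` is harmonic. Altogether the target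
operator applied to `v` is `ρ |∂_τ Φ|² (L_m u) ∘ Φ`.
-/

open Real Filter Topology
open scoped Complex

section SecondDerivatives

variable {𝕜 : Type*} [NontriviallyNormedField 𝕜]

theorem hasDerivAt_deriv_mul {𝔸 : Type*} [NormedCommRing 𝔸] [NormedAlgebra 𝕜 𝔸]
    {f g : 𝕜 → 𝔸} {f'' g'' : 𝔸} {t : 𝕜}
    (hf : ∀ᶠ s in 𝓝 t, DifferentiableAt 𝕜 f s) (hg : ∀ᶠ s in 𝓝 t, DifferentiableAt 𝕜 g s)
    (hf' : HasDerivAt (deriv f) f'' t) (hg' : HasDerivAt (deriv g) g'' t) :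
    HasDerivAt (deriv fun s => f s * g s)
      (f'' * g t + 2 * (deriv f t * deriv g t) + f t * g'') t := by
  have hderiv : deriv (fun s => f s * g s) =ᶠ[𝓝 t] fun s => deriv f s * g s + f s * deriv g s :=
    (hf.and hg).mono fun s ⟨hfs, hgs⟩ => deriv_mul hfs hgs
  exact (((hf'.mul hg.self_of_nhds.hasDerivAt).add
    (hf.self_of_nhds.hasDerivAt.mul hg')).congr_of_eventuallyEq hderiv).congr_deriv (by ring)

theorem hasDerivAt_deriv_cexp [NormedAlgebra 𝕜 ℂ] {L L' : 𝕜 → ℂ} {L'' : ℂ} {t : 𝕜}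
    (hL : ∀ᶠ s in 𝓝 t, HasDerivAt L (L' s) s) (hL' : HasDerivAt L' L'' t) :
    HasDerivAt (deriv fun s => cexp (L s)) (cexp (L t) * (L'' + L' t ^ 2)) t := by
  have hderiv : deriv (fun s => cexp (L s)) =ᶠ[𝓝 t] fun s => cexp (L s) * L' s :=
    hL.mono fun s hs => hs.cexp.deriv
  exact ((hL.self_of_nhds.cexp.mul hL').congr_of_eventuallyEq hderiv).congr_deriv (by ring)

variable {E F : Type*} [NormedAddCommGroup E] [NormedSpace 𝕜 E] [NormedAddCommGroup F]
  [NormedSpace 𝕜 F]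

theorem eventually_hasDerivAt_comp {g : E → F} {c c' : 𝕜 → E} {t : 𝕜}
    (hg : ContDiffAt 𝕜 2 g (c t)) (hc : ∀ᶠ s in 𝓝 t, HasDerivAt c (c' s) s) :
    ∀ᶠ s in 𝓝 t, HasDerivAt (g ∘ c) (fderiv 𝕜 g (c s) (c' s)) s := by
  have hg' : ∀ᶠ s in 𝓝 t, DifferentiableAt 𝕜 g (c s) :=
    hc.self_of_nhds.continuousAt.eventually
      ((hg.eventually (by simp)).mono fun y hy => hy.differentiableAt (by simp))
  filter_upwards [hg', hc] with s hgs hcs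
  exact hgs.hasFDerivAt.comp_hasDerivAt s hcs

theorem hasDerivAt_deriv_comp {g : E → F} {c c' : 𝕜 → E} {c'' : E} {t : 𝕜}
    (hg : ContDiffAt 𝕜 2 g (c t)) (hc : ∀ᶠ s in 𝓝 t, HasDerivAt c (c' s) s)
    (hc' : HasDerivAt c' c'' t) :
    HasDerivAt (deriv (g ∘ c))
      (fderiv 𝕜 g (c t) c'' + fderiv 𝕜 (fderiv 𝕜 g) (c t) (c' t) (c' t)) t := by
  have hDg : HasFDerivAt (fderiv 𝕜 g) (fderiv 𝕜 (fderiv 𝕜 g) (c t)) (c t) :=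
    ((hg.fderiv_right (m := 1) le_rfl).differentiableAt (by simp)).hasFDerivAt
  exact (((hDg.comp_hasDerivAt t hc.self_of_nhds).clm_apply hc').congr_of_eventuallyEq
    ((eventually_hasDerivAt_comp hg hc).mono fun s hs => hs.deriv)).congr_deriv (add_comm _ _)

end SecondDerivatives

section CexpMulComp

variable {E : Type*} [NormedAddCommGroup E] [NormedSpace ℝ E]

theorem deriv_cexp_mul_comp {L : ℝ → ℂ} {L' : ℂ} {g : E → ℂ} {c : ℝ → E} {c' : E} {t : ℝ}
    (hL : HasDerivAt L L' t) (hg : DifferentiableAt ℝ g (c t)) (hc : HasDerivAt c c' t) :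
    deriv (fun s => cexp (L s) * g (c s)) t =
      cexp (L t) * (L' * g (c t) + fderiv ℝ g (c t) c') :=
  (hL.cexp.mul (hg.hasFDerivAt.comp_hasDerivAt t hc)).deriv.trans
    (by rw [Function.comp_apply]; ring)

theorem hasDerivAt_deriv_cexp_mul_comp {L L' : ℝ → ℂ} {L'' : ℂ} {g : E → ℂ} {c c' : ℝ → E}
    {c'' : E} {t : ℝ} (hL : ∀ᶠ s in 𝓝 t, HasDerivAt L (L' s) s) (hL' : HasDerivAt L' L'' t)
    (hg : ContDiffAt ℝ 2 g (c t)) (hc : ∀ᶠ s in 𝓝 t, HasDerivAt c (c' s) s)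
    (hc' : HasDerivAt c' c'' t) :
    HasDerivAt (deriv fun s => cexp (L s) * g (c s))
      (cexp (L t) * ((L'' + L' t ^ 2) * g (c t) + 2 * L' t * fderiv ℝ g (c t) (c' t) +
        (fderiv ℝ g (c t) c'' + fderiv ℝ (fderiv ℝ g) (c t) (c' t) (c' t)))) t := by
  have hcomp := eventually_hasDerivAt_comp hg hc
  refine (hasDerivAt_deriv_mul (hL.mono fun s hs => hs.cexp.differentiableAt)
    (hcomp.mono fun s hs => hs.differentiableAt) (hasDerivAt_deriv_cexp hL hL')
    (hasDerivAt_deriv_comp hg hc hc')).congr_deriv ?_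
  rw [hL.self_of_nhds.cexp.deriv, hcomp.self_of_nhds.deriv, Function.comp_apply]
  ring

end CexpMulComp

theorem ContinuousLinearMap.apply_prod_mk {F : Type*} [NormedAddCommGroup F] [NormedSpace ℝ F]
    (A : ℝ × ℝ →L[ℝ] F) (x y : ℝ) : A (x, y) = x • A (1, 0) + y • A (0, 1) := by
  rw [← map_smul, ← map_smul, ← map_add]
  simp

theorem ContinuousLinearMap.apply_self_add_apply_rotate {F : Type*} [NormedAddCommGroup F]
    [NormedSpace ℝ F] (B : ℝ × ℝ →L[ℝ] ℝ × ℝ →L[ℝ] F) (a : ℝ × ℝ) :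
    B a a + B (a.2, -a.1) (a.2, -a.1) =
      (a.1 ^ 2 + a.2 ^ 2) • (B (1, 0) (1, 0) + B (0, 1) (0, 1)) := by
  have hB : ∀ x y x' y' : ℝ, B (x, y) (x', y') = (x * x') • B (1, 0) (1, 0) +
      (x * y') • B (1, 0) (0, 1) + (y * x') • B (0, 1) (1, 0) + (y * y') • B (0, 1) (0, 1) := by
    intro x y x' y'
    rw [B.apply_prod_mk x y, add_apply, smul_apply, smul_apply, (B (1, 0)).apply_prod_mk x' y',
      (B (0, 1)).apply_prod_mk x' y']
    module
  obtain ⟨x, y⟩ := a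
  rw [hB x y x y, hB y (-x) y (-x)]
  module

theorem pdx_eq_fderiv {u : ℝ → ℝ → ℂ} {x y : ℝ}
    (hu : DifferentiableAt ℝ (fun p : ℝ × ℝ => u p.1 p.2) (x, y)) :
    pdx u x y = fderiv ℝ (fun p : ℝ × ℝ => u p.1 p.2) (x, y) (1, 0) :=
  (hu.hasFDerivAt.comp_hasDerivAt (f := fun t => (t, y)) x
    ((hasDerivAt_id' x).prodMk (hasDerivAt_const x y))).deriv

theorem pdx_pdx_eq_fderiv_fderiv {u : ℝ → ℝ → ℂ} {x y : ℝ}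
    (hu : ContDiffAt ℝ 2 (fun p : ℝ × ℝ => u p.1 p.2) (x, y)) :
    pdx (pdx u) x y = fderiv ℝ (fderiv ℝ fun p : ℝ × ℝ => u p.1 p.2) (x, y) (1, 0) (1, 0) := by
  have h := hasDerivAt_deriv_comp (c := fun t => (t, y)) (c' := fun _ => ((1 : ℝ), (0 : ℝ))) hu
    (Eventually.of_forall fun t => (hasDerivAt_id t).prodMk (hasDerivAt_const t y))
    (hasDerivAt_const x _)
  rw [map_zero, zero_add] at h
  exact h.deriv

theorem pdy_pdy_eq_fderiv_fderiv {u : ℝ → ℝ → ℂ} {x y : ℝ}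
    (hu : ContDiffAt ℝ 2 (fun p : ℝ × ℝ => u p.1 p.2) (x, y)) :
    pdy (pdy u) x y = fderiv ℝ (fderiv ℝ fun p : ℝ × ℝ => u p.1 p.2) (x, y) (0, 1) (0, 1) := by
  have h := hasDerivAt_deriv_comp (c := fun s => (x, s)) (c' := fun _ => ((0 : ℝ), (1 : ℝ))) hu
    (Eventually.of_forall fun s => (hasDerivAt_const s x).prodMk (hasDerivAt_id s))
    (hasDerivAt_const y _)
  rw [map_zero, zero_add] at h
  exact h.deriv

noncomputable def bipolar (α : ℝ) (p : ℝ × ℝ) : ℝ × ℝ :=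
  (α * sinh p.1 / (cosh p.1 - cos p.2), α * sin p.2 / (cosh p.1 - cos p.2))

noncomputable def bipolarDerivFst (α : ℝ) (p : ℝ × ℝ) : ℝ × ℝ :=
  (α * (1 - cosh p.1 * cos p.2) / (cosh p.1 - cos p.2) ^ 2,
    -(α * sinh p.1 * sin p.2) / (cosh p.1 - cos p.2) ^ 2)

noncomputable def bipolarDerivSnd (α : ℝ) (p : ℝ × ℝ) : ℝ × ℝ :=
  ((bipolarDerivFst α p).2, -(bipolarDerivFst α p).1)

theorem cosh_sub_cos_pos {t : ℝ} (ht : 0 < t) (s : ℝ) : 0 < cosh t - cos s := by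
  linarith [cos_le_one s, one_lt_cosh.2 ht.ne']

theorem hasDerivAt_bipolar_fst (α : ℝ) {t : ℝ} (s : ℝ) (ht : 0 < t) :
    HasDerivAt (fun t => bipolar α (t, s)) (bipolarDerivFst α (t, s)) t := by
  have hD := (cosh_sub_cos_pos ht s).ne'
  have hDt := (hasDerivAt_cosh t).sub_const (cos s)
  refine ((((hasDerivAt_sinh t).const_mul α).div hDt hD).prodMk
    ((hasDerivAt_const t (α * sin s)).div hDt hD)).congr_deriv ?_
  simp only [bipolarDerivFst, Prod.ext_iff]
  constructor
  · field_simp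
    linear_combination α * cosh_sq t
  · ring

theorem hasDerivAt_bipolar_snd (α t : ℝ) {s : ℝ} (ht : 0 < t) :
    HasDerivAt (fun s => bipolar α (t, s)) (bipolarDerivSnd α (t, s)) s := by
  have hD := (cosh_sub_cos_pos ht s).ne'
  have hDs := (hasDerivAt_cos s).const_sub (cosh t)
  refine (((hasDerivAt_const s (α * sinh t)).div hDs hD).prodMk
    (((hasDerivAt_sin s).const_mul α).div hDs hD)).congr_deriv ?_
  simp only [bipolarDerivSnd, bipolarDerivFst, Prod.ext_iff]
  constructor
  · ring
  · field_simp
    linear_combination (-α) * sin_sq_add_cos_sq s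

theorem bipolar_harmonic (α : ℝ) {t : ℝ} (s : ℝ) (ht : 0 < t) :
    ∃ a b : ℝ × ℝ, HasDerivAt (fun t => bipolarDerivFst α (t, s)) a t ∧
      HasDerivAt (fun s => bipolarDerivSnd α (t, s)) b s ∧ a + b = 0 := by
  have hD0 := (cosh_sub_cos_pos ht s).ne'
  have hD := pow_ne_zero 2 hD0
  have hDt := ((hasDerivAt_cosh t).sub_const (cos s)).pow 2
  have hDs := ((hasDerivAt_cos s).const_sub (cosh t)).pow 2
  refine ⟨_, _,
    (((((hasDerivAt_cosh t).mul_const (cos s)).const_sub 1).const_mul α).div hDt hD).prodMk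
      (((((hasDerivAt_sinh t).const_mul α).mul_const (sin s)).neg).div hDt hD),
    ((((hasDerivAt_sin s).const_mul (α * sinh t)).neg).div hDs hD).prodMk
      (((((hasDerivAt_cos s).const_mul (cosh t)).const_sub 1).const_mul α).div hDs hD).neg, ?_⟩
  simp only [Prod.ext_iff, Pi.pow_apply, Pi.neg_apply, Nat.cast_ofNat, Nat.add_one_sub_one,
    pow_one, Prod.fst_add, Prod.snd_add, Prod.fst_zero, Prod.snd_zero]
  constructor
  · field_simp
    linear_combination (2 * α * sinh t) * sin_sq_add_cos_sq s
  · field_simp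
    linear_combination (-2 * α * sin s) * cosh_sq t

noncomputable def bipolarWeightLog (m : ℂ) (p : ℝ × ℝ) : ℂ :=
  (m - 1) / 2 * Real.log (sinh p.1) + -(m / 2) * Real.log (cosh p.1 - cos p.2)

noncomputable def bipolarWeightLogDerivFst (m : ℂ) (p : ℝ × ℝ) : ℂ :=
  (m - 1) / 2 * (cosh p.1 / sinh p.1 : ℝ) + -(m / 2) * (sinh p.1 / (cosh p.1 - cos p.2) : ℝ)

noncomputable def bipolarWeightLogDerivSnd (m : ℂ) (p : ℝ × ℝ) : ℂ :=
  -(m / 2) * (sin p.2 / (cosh p.1 - cos p.2) : ℝ)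

theorem cpow_mul_cpow_eq_cexp_bipolarWeightLog (m : ℂ) {t : ℝ} (s : ℝ) (ht : 0 < t) :
    (sinh t : ℂ) ^ ((m - 1) / 2) * ((cosh t - cos s : ℝ) : ℂ) ^ (-(m / 2)) =
      cexp (bipolarWeightLog m (t, s)) := by
  have hsh := sinh_pos_iff.2 ht
  have hD := cosh_sub_cos_pos ht s
  rw [Complex.cpow_def_of_ne_zero (by exact_mod_cast hsh.ne'),
    Complex.cpow_def_of_ne_zero (by exact_mod_cast hD.ne'), ← Complex.exp_add,
    ← Complex.ofReal_log hsh.le, ← Complex.ofReal_log hD.le, bipolarWeightLog]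
  ring_nf

theorem hasDerivAt_bipolarWeightLog_fst (m : ℂ) {t : ℝ} (s : ℝ) (ht : 0 < t) :
    HasDerivAt (fun t => bipolarWeightLog m (t, s)) (bipolarWeightLogDerivFst m (t, s)) t :=
  ((((hasDerivAt_sinh t).log (sinh_pos_iff.2 ht).ne').ofReal_comp.const_mul _).add
    ((((hasDerivAt_cosh t).sub_const (cos s)).log
      (cosh_sub_cos_pos ht s).ne').ofReal_comp.const_mul _))

theorem hasDerivAt_bipolarWeightLog_snd (m : ℂ) {t : ℝ} (s : ℝ) (ht : 0 < t) :
    HasDerivAt (fun s => bipolarWeightLog m (t, s)) (bipolarWeightLogDerivSnd m (t, s)) s := by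
  have h := ((((hasDerivAt_cos s).const_sub (cosh t)).log
    (cosh_sub_cos_pos ht s).ne').ofReal_comp.const_mul (-(m / 2)))
  rw [neg_neg] at h
  exact h.const_add ((m - 1) / 2 * (Real.log (sinh t) : ℂ))

theorem bipolarWeightLog_laplacian (m : ℂ) {t : ℝ} (s : ℝ) (ht : 0 < t) :
    ∃ a b : ℂ, HasDerivAt (fun t => bipolarWeightLogDerivFst m (t, s)) a t ∧
      HasDerivAt (fun s => bipolarWeightLogDerivSnd m (t, s)) b s ∧
      a + b = -((m - 1) / 2) / (sinh t : ℂ) ^ 2 := by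
  have hsh := (sinh_pos_iff.2 ht).ne'
  have hD := (cosh_sub_cos_pos ht s).ne'
  have hcoth : HasDerivAt (fun t => cosh t / sinh t) (-1 / sinh t ^ 2) t :=
    ((hasDerivAt_cosh t).div (hasDerivAt_sinh t) hsh).congr_deriv (by
      field_simp
      linear_combination -cosh_sq t)
  have hfst : HasDerivAt (fun t => sinh t / (cosh t - cos s))
      ((1 - cosh t * cos s) / (cosh t - cos s) ^ 2) t :=
    ((hasDerivAt_sinh t).div ((hasDerivAt_cosh t).sub_const (cos s)) hD).congr_deriv (by
      field_simp
      linear_combination cosh_sq t)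
  have hsnd : HasDerivAt (fun s => sin s / (cosh t - cos s))
      (-((1 - cosh t * cos s) / (cosh t - cos s) ^ 2)) s :=
    ((hasDerivAt_sin s).div ((hasDerivAt_cos s).const_sub (cosh t)) hD).congr_deriv (by
      field_simp
      linear_combination -sin_sq_add_cos_sq s)
  refine ⟨_, _, (hcoth.ofReal_comp.const_mul _).add (hfst.ofReal_comp.const_mul _),
    hsnd.ofReal_comp.const_mul _, ?_⟩
  simp only [Complex.ofReal_neg, Complex.ofReal_div, Complex.ofReal_one, Complex.ofReal_pow]
  ring

-- `2 L + log sinh τ = m log (x / α)`, differentiated in `τ` and in `θ`.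
theorem two_mul_bipolarWeightLogDerivFst_add_coth (m : ℂ) {α t : ℝ} (s : ℝ) (hα : α ≠ 0)
    (ht : 0 < t) :
    2 * bipolarWeightLogDerivFst m (t, s) + (cosh t / sinh t : ℝ) =
      m * (bipolarDerivFst α (t, s)).1 / (bipolar α (t, s)).1 := by
  have hsh : (sinh t : ℂ) ≠ 0 := by exact_mod_cast (sinh_pos_iff.2 ht).ne'
  have hD : (cosh t : ℂ) - cos s ≠ 0 := by exact_mod_cast (cosh_sub_cos_pos ht s).ne'
  have hα' : (α : ℂ) ≠ 0 := by exact_mod_cast hα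
  have hch : (cosh t : ℂ) ^ 2 = sinh t ^ 2 + 1 := by exact_mod_cast cosh_sq t
  simp only [bipolarWeightLogDerivFst, bipolarDerivFst, bipolar, Complex.ofReal_div,
    Complex.ofReal_mul, Complex.ofReal_sub, Complex.ofReal_pow, Complex.ofReal_one]
  field_simp
  linear_combination m * hch

theorem two_mul_bipolarWeightLogDerivSnd (m : ℂ) {α t : ℝ} (s : ℝ) (hα : α ≠ 0) (ht : 0 < t) :
    2 * bipolarWeightLogDerivSnd m (t, s) =
      m * (bipolarDerivFst α (t, s)).2 / (bipolar α (t, s)).1 := by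
  have hsh : (sinh t : ℂ) ≠ 0 := by exact_mod_cast (sinh_pos_iff.2 ht).ne'
  have hD : (cosh t : ℂ) - cos s ≠ 0 := by exact_mod_cast (cosh_sub_cos_pos ht s).ne'
  have hα' : (α : ℂ) ≠ 0 := by exact_mod_cast hα
  simp only [bipolarWeightLogDerivSnd, bipolarDerivFst, bipolar, Complex.ofReal_div,
    Complex.ofReal_mul, Complex.ofReal_sub, Complex.ofReal_neg, Complex.ofReal_pow]
  field_simp

-- Together with `bipolarWeightLog_laplacian`: `exp L` solves the target equation.
theorem bipolarWeightLog_equation (m : ℂ) {t : ℝ} (s : ℝ) (ht : 0 < t) :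
    -((m - 1) / 2) / (sinh t : ℂ) ^ 2 + bipolarWeightLogDerivFst m (t, s) ^ 2 +
      bipolarWeightLogDerivSnd m (t, s) ^ 2 +
      (cosh t / sinh t : ℝ) * bipolarWeightLogDerivFst m (t, s) +
      (1 / 4 - (m - 1) ^ 2 / (4 * (sinh t : ℂ) ^ 2)) = 0 := by
  have hsh : (sinh t : ℂ) ≠ 0 := by exact_mod_cast (sinh_pos_iff.2 ht).ne'
  have hD : (cosh t : ℂ) - cos s ≠ 0 := by exact_mod_cast (cosh_sub_cos_pos ht s).ne'
  have hch : (cosh t : ℂ) ^ 2 = sinh t ^ 2 + 1 := by exact_mod_cast cosh_sq t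
  have hsc : (sin s : ℂ) ^ 2 + cos s ^ 2 = 1 := by exact_mod_cast sin_sq_add_cos_sq s
  have hcoth : ((cosh t : ℂ) / sinh t) ^ 2 - 1 / (sinh t : ℂ) ^ 2 = 1 := by
    field_simp
    linear_combination hch
  have hgrad : ((sinh t : ℂ) / (cosh t - cos s)) ^ 2 + ((sin s : ℂ) / (cosh t - cos s)) ^ 2 =
      (cosh t + cos s) / (cosh t - cos s) := by
    field_simp
    linear_combination -hch + hsc
  have hshinv : (sinh t : ℂ) * (sinh t : ℂ)⁻¹ = 1 := mul_inv_cancel₀ hsh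
  have hDinv : ((cosh t : ℂ) - cos s) * ((cosh t : ℂ) - cos s)⁻¹ = 1 := mul_inv_cancel₀ hD
  simp only [bipolarWeightLogDerivFst, bipolarWeightLogDerivSnd, Complex.ofReal_div,
    Complex.ofReal_sub]
  linear_combination ((m - 1) ^ 2 / 4 + (m - 1) / 2) * hcoth + m ^ 2 / 4 * hgrad -
    m ^ 2 / 4 * hDinv - m ^ 2 / 2 * cosh t * ((cosh t : ℂ) - cos s)⁻¹ * hshinv

noncomputable def bipolarWeinsteinTransform (m : ℂ) (α : ℝ) (g : ℝ × ℝ → ℂ) (t s : ℝ) : ℂ :=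
  (sinh t : ℂ) ^ ((m - 1) / 2) * ((cosh t - cos s : ℝ) : ℂ) ^ (-(m / 2)) * g (bipolar α (t, s))

theorem bipolarWeinsteinTransform_eq_cexp (m : ℂ) (α : ℝ) (g : ℝ × ℝ → ℂ) {t : ℝ} (s : ℝ)
    (ht : 0 < t) :
    bipolarWeinsteinTransform m α g t s =
      cexp (bipolarWeightLog m (t, s)) * g (bipolar α (t, s)) := by
  rw [← cpow_mul_cpow_eq_cexp_bipolarWeightLog m s ht]
  rfl

theorem bipolarWeinsteinTransform_eventuallyEq_cexp (m : ℂ) (α : ℝ) (g : ℝ × ℝ → ℂ) {τ : ℝ}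
    (θ : ℝ) (hτ : 0 < τ) :
    (fun t => bipolarWeinsteinTransform m α g t θ) =ᶠ[𝓝 τ]
      fun t => cexp (bipolarWeightLog m (t, θ)) * g (bipolar α (t, θ)) :=
  (eventually_gt_nhds hτ).mono fun _ ht => bipolarWeinsteinTransform_eq_cexp m α g θ ht

theorem pdx_bipolarWeinsteinTransform (m : ℂ) (α : ℝ) {g : ℝ × ℝ → ℂ} {τ : ℝ} (θ : ℝ)
    (hτ : 0 < τ) (hg : DifferentiableAt ℝ g (bipolar α (τ, θ))) :
    pdx (bipolarWeinsteinTransform m α g) τ θ =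
      cexp (bipolarWeightLog m (τ, θ)) *
        (bipolarWeightLogDerivFst m (τ, θ) * g (bipolar α (τ, θ)) +
          fderiv ℝ g (bipolar α (τ, θ)) (bipolarDerivFst α (τ, θ))) :=
  (bipolarWeinsteinTransform_eventuallyEq_cexp m α g θ hτ).deriv_eq.trans
    (deriv_cexp_mul_comp (hasDerivAt_bipolarWeightLog_fst m θ hτ) hg
      (hasDerivAt_bipolar_fst α θ hτ))

theorem pdx_pdx_bipolarWeinsteinTransform (m : ℂ) (α : ℝ) {g : ℝ × ℝ → ℂ} {τ : ℝ} (θ : ℝ)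
    {Lττ : ℂ} {Φττ : ℝ × ℝ} (hτ : 0 < τ) (hg : ContDiffAt ℝ 2 g (bipolar α (τ, θ)))
    (hL : HasDerivAt (fun t => bipolarWeightLogDerivFst m (t, θ)) Lττ τ)
    (hΦ : HasDerivAt (fun t => bipolarDerivFst α (t, θ)) Φττ τ) :
    pdx (pdx (bipolarWeinsteinTransform m α g)) τ θ =
      cexp (bipolarWeightLog m (τ, θ)) * ((Lττ + bipolarWeightLogDerivFst m (τ, θ) ^ 2) *
          g (bipolar α (τ, θ)) +
        2 * bipolarWeightLogDerivFst m (τ, θ) *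
          fderiv ℝ g (bipolar α (τ, θ)) (bipolarDerivFst α (τ, θ)) +
        (fderiv ℝ g (bipolar α (τ, θ)) Φττ + fderiv ℝ (fderiv ℝ g) (bipolar α (τ, θ))
          (bipolarDerivFst α (τ, θ)) (bipolarDerivFst α (τ, θ)))) := by
  have hpos : ∀ᶠ t in 𝓝 τ, 0 < t := eventually_gt_nhds hτ
  exact ((hasDerivAt_deriv_cexp_mul_comp
    (hpos.mono fun t ht => hasDerivAt_bipolarWeightLog_fst m θ ht) hL hg
    (hpos.mono fun t ht => hasDerivAt_bipolar_fst α θ ht) hΦ).congr_of_eventuallyEq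
      (bipolarWeinsteinTransform_eventuallyEq_cexp m α g θ hτ).deriv).deriv

theorem pdy_pdy_bipolarWeinsteinTransform (m : ℂ) (α : ℝ) {g : ℝ × ℝ → ℂ} {τ : ℝ} (θ : ℝ)
    {Lθθ : ℂ} {Φθθ : ℝ × ℝ} (hτ : 0 < τ) (hg : ContDiffAt ℝ 2 g (bipolar α (τ, θ)))
    (hL : HasDerivAt (fun s => bipolarWeightLogDerivSnd m (τ, s)) Lθθ θ)
    (hΦ : HasDerivAt (fun s => bipolarDerivSnd α (τ, s)) Φθθ θ) :
    pdy (pdy (bipolarWeinsteinTransform m α g)) τ θ =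
      cexp (bipolarWeightLog m (τ, θ)) * ((Lθθ + bipolarWeightLogDerivSnd m (τ, θ) ^ 2) *
          g (bipolar α (τ, θ)) +
        2 * bipolarWeightLogDerivSnd m (τ, θ) *
          fderiv ℝ g (bipolar α (τ, θ)) (bipolarDerivSnd α (τ, θ)) +
        (fderiv ℝ g (bipolar α (τ, θ)) Φθθ + fderiv ℝ (fderiv ℝ g) (bipolar α (τ, θ))
          (bipolarDerivSnd α (τ, θ)) (bipolarDerivSnd α (τ, θ)))) := by
  have h := (hasDerivAt_deriv_cexp_mul_comp
    (Eventually.of_forall fun s => hasDerivAt_bipolarWeightLog_snd m s hτ) hL hg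
    (Eventually.of_forall fun _ => hasDerivAt_bipolar_snd α τ hτ) hΦ).deriv
  rwa [← funext (bipolarWeinsteinTransform_eq_cexp m α g · hτ)] at h

theorem bipolarWeinsteinTransform_equation (m : ℂ) {α : ℝ} (hα : α ≠ 0) {g : ℝ × ℝ → ℂ}
    {τ θ : ℝ} (hτ : 0 < τ) (hg : ContDiffAt ℝ 2 g (bipolar α (τ, θ))) :
    pdx (pdx (bipolarWeinsteinTransform m α g)) τ θ +
        pdy (pdy (bipolarWeinsteinTransform m α g)) τ θ +
        ((cosh τ / sinh τ : ℝ) : ℂ) * pdx (bipolarWeinsteinTransform m α g) τ θ +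
        (1 / 4 - (m - 1) ^ 2 / (4 * (sinh τ : ℂ) ^ 2)) * bipolarWeinsteinTransform m α g τ θ =
      cexp (bipolarWeightLog m (τ, θ)) *
        (((bipolarDerivFst α (τ, θ)).1 ^ 2 + (bipolarDerivFst α (τ, θ)).2 ^ 2 : ℝ) : ℂ) *
        (fderiv ℝ (fderiv ℝ g) (bipolar α (τ, θ)) (1, 0) (1, 0) +
          fderiv ℝ (fderiv ℝ g) (bipolar α (τ, θ)) (0, 1) (0, 1) +
          m / ((bipolar α (τ, θ)).1 : ℂ) * fderiv ℝ g (bipolar α (τ, θ)) (1, 0)) := by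
  obtain ⟨Lττ, Lθθ, hLττ, hLθθ, hΔL⟩ := bipolarWeightLog_laplacian m θ hτ
  obtain ⟨Φττ, Φθθ, hΦττ, hΦθθ, hΔΦ⟩ := bipolar_harmonic α θ hτ
  rw [pdx_pdx_bipolarWeinsteinTransform m α θ hτ hg hLττ hΦττ,
    pdy_pdy_bipolarWeinsteinTransform m α θ hτ hg hLθθ hΦθθ,
    pdx_bipolarWeinsteinTransform m α θ hτ (hg.differentiableAt (by norm_num)),
    bipolarWeinsteinTransform_eq_cexp m α g θ hτ]
  set p := bipolar α (τ, θ)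
  set a := bipolarDerivFst α (τ, θ)
  have hharm : fderiv ℝ g p Φττ + fderiv ℝ g p Φθθ = 0 := by rw [← map_add, hΔΦ, map_zero]
  have hconf : fderiv ℝ (fderiv ℝ g) p a a +
      fderiv ℝ (fderiv ℝ g) p (bipolarDerivSnd α (τ, θ)) (bipolarDerivSnd α (τ, θ)) = _ :=
    (fderiv ℝ (fderiv ℝ g) p).apply_self_add_apply_rotate a
  have hfst : fderiv ℝ g p a = _ := (fderiv ℝ g p).apply_prod_mk a.1 a.2
  have hsnd : fderiv ℝ g p (bipolarDerivSnd α (τ, θ)) = _ :=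
    (fderiv ℝ g p).apply_prod_mk a.2 (-a.1)
  simp only [Complex.real_smul, Complex.ofReal_add, Complex.ofReal_pow, Complex.ofReal_neg]
    at hconf hfst hsnd ⊢
  linear_combination cexp (bipolarWeightLog m (τ, θ)) *
    (g p * (hΔL + bipolarWeightLog_equation m θ hτ) +
      fderiv ℝ g p a * two_mul_bipolarWeightLogDerivFst_add_coth m θ hα hτ +
      fderiv ℝ g p (bipolarDerivSnd α (τ, θ)) * two_mul_bipolarWeightLogDerivSnd m θ hα hτ +
      hharm + hconf + m * a.1 / (p.1 : ℂ) * hfst + m * a.2 / (p.1 : ℂ) * hsnd)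

theorem weinstein_bipolar_transform_general (m : ℂ) (α : ℝ) (hα : 0 < α)
    (Ω : Set (ℝ × ℝ)) (hΩ : IsOpen Ω)
    (u : ℝ → ℝ → ℂ)
    (hu : ContDiffOn ℝ 2 (fun p : ℝ × ℝ => u p.1 p.2) Ω)
    (hsol : ∀ p ∈ Ω, pdx (pdx u) p.1 p.2 + pdy (pdy u) p.1 p.2
      + (m / (p.1 : ℂ)) * pdx u p.1 p.2 = 0)
    (v : ℝ → ℝ → ℂ)
    (hv : ∀ τ θ : ℝ, v τ θ
      = (Real.sinh τ : ℂ) ^ ((m - 1) / 2) *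
          ((Real.cosh τ - Real.cos θ : ℝ) : ℂ) ^ (-(m / 2)) *
          u (α * Real.sinh τ / (Real.cosh τ - Real.cos θ))
            (α * Real.sin θ / (Real.cosh τ - Real.cos θ)))
    (τ θ : ℝ) (hτ : 0 < τ)
    (hmem : (α * Real.sinh τ / (Real.cosh τ - Real.cos θ),
        α * Real.sin θ / (Real.cosh τ - Real.cos θ)) ∈ Ω) :
    pdx (pdx v) τ θ + pdy (pdy v) τ θ
      + ((Real.cosh τ / Real.sinh τ : ℝ) : ℂ) * pdx v τ θ
      + (1 / 4 - (m - 1) ^ 2 / (4 * (Real.sinh τ : ℂ) ^ 2)) * v τ θ = 0 := by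
  obtain rfl : v = bipolarWeinsteinTransform m α fun p => u p.1 p.2 :=
    funext fun t => funext (hv t)
  have hg := hu.contDiffAt (hΩ.mem_nhds hmem)
  have hweinstein := hsol _ hmem
  dsimp only at hweinstein
  rw [pdx_pdx_eq_fderiv_fderiv hg, pdy_pdy_eq_fderiv_fderiv hg,
    pdx_eq_fderiv (hg.differentiableAt (by norm_num))] at hweinstein
  rw [bipolarWeinsteinTransform_equation m hα.ne' hτ hg]
  exact mul_eq_zero_of_right _ hweinstein

/-- If `u` solves the Weinstein equation `L_m u = 0` on an open subset of the right half-plane,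
then in bipolar coordinates the transformed function
`v_m(τ,θ) = sinh^{(m-1)/2}τ (cosh τ - cos θ)^{-m/2} u(τ,θ)` satisfies
`∂²v/∂τ² + ∂²v/∂θ² + coth τ ∂v/∂τ + (1/4 - (m-1)²/(4 sinh²τ)) v = 0`. -/
theorem weinstein_bipolar_transform (m : ℂ) (α : ℝ) (hα : 0 < α)
    (Ω : Set (ℝ × ℝ)) (hΩ : IsOpen Ω) (hΩH : Ω ⊆ {p : ℝ × ℝ | 0 < p.1})
    (u : ℝ → ℝ → ℂ)
    (hu : ContDiffOn ℝ 2 (fun p : ℝ × ℝ => u p.1 p.2) Ω)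
    (hsol : ∀ p ∈ Ω, pdx (pdx u) p.1 p.2 + pdy (pdy u) p.1 p.2
      + (m / (p.1 : ℂ)) * pdx u p.1 p.2 = 0)
    (v : ℝ → ℝ → ℂ)
    (hv : ∀ τ θ : ℝ, v τ θ
      = (Real.sinh τ : ℂ) ^ ((m - 1) / 2) *
          ((Real.cosh τ - Real.cos θ : ℝ) : ℂ) ^ (-(m / 2)) *
          u (α * Real.sinh τ / (Real.cosh τ - Real.cos θ))
            (α * Real.sin θ / (Real.cosh τ - Real.cos θ)))
    (τ θ : ℝ) (hτ : 0 < τ)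
    (hmem : (α * Real.sinh τ / (Real.cosh τ - Real.cos θ),
        α * Real.sin θ / (Real.cosh τ - Real.cos θ)) ∈ Ω) :
    pdx (pdx v) τ θ + pdy (pdy v) τ θ
      + ((Real.cosh τ / Real.sinh τ : ℝ) : ℂ) * pdx v τ θ
      + (1 / 4 - (m - 1) ^ 2 / (4 * (Real.sinh τ : ℂ) ^ 2)) * v τ θ = 0 :=
  weinstein_bipolar_transform_general m α hα Ω hΩ u hu hsol v hv τ θ hτ hmem
end
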